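/- (Jensen lower bound for the controlled cost, abstract version) Let P and Q be equivalent probability measures with likelihood 𝓛 = dQ/dP, let W be a random variable with e^{-λW} ∈ L¹(P) and log 𝓛 ∈ L¹(Q) for λ > 0. Then E_Q[W + λ⁻¹ log 𝓛] ≥ −λ⁻¹ log E_P[e^{-λW}], with equality if and only if e^{-λW} 𝓛⁻¹ is Q-almost surely constant, in which case dQ/dP = e^{-λW}/E_P[e^{-λW}]. -/
import Mathlib


open MeasureTheory

/-- Jensen lower bound for the controlled cost, abstract version:
for equivalent probability measures `P ∼ Q` with likelihood `𝓛 = dQ/dP`, `λ > 0`,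
and `W` with `e^{-λW} ∈ L¹(P)`, `W ∈ L¹(Q)`, `log 𝓛 ∈ L¹(Q)`, one has
`E_Q[W + λ⁻¹ log 𝓛] ≥ −λ⁻¹ log E_P[e^{-λW}]`, with equality iff `e^{-λW}𝓛⁻¹` is
`Q`-a.s. constant, in which case `dQ/dP = e^{-λW}/E_P[e^{-λW}]`. -/
theorem stmt_18 {Ω : Type*} [MeasurableSpace Ω] (P Q : Measure Ω)
    [IsProbabilityMeasure P] [IsProbabilityMeasure Q]
    (hQP : Q ≪ P) (hPQ : P ≪ Q)
    (hLpos : ∀ᵐ ω ∂P, 0 < Q.rnDeriv P ω)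
    (W : Ω → ℝ) (hWmeas : Measurable W) (lam : ℝ) (hlam : 0 < lam)
    (hexp : Integrable (fun ω => Real.exp (-lam * W ω)) P)
    (hWQ : Integrable W Q)
    (hlog : Integrable (fun ω => Real.log ((Q.rnDeriv P ω).toReal)) Q) :
    (∫ ω, (W ω + lam⁻¹ * Real.log ((Q.rnDeriv P ω).toReal)) ∂Q ≥
      -lam⁻¹ * Real.log (∫ ω, Real.exp (-lam * W ω) ∂P)) ∧
    ((∫ ω, (W ω + lam⁻¹ * Real.log ((Q.rnDeriv P ω).toReal)) ∂Q =
        -lam⁻¹ * Real.log (∫ ω, Real.exp (-lam * W ω) ∂P)) ↔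
      ∃ c : ℝ, ∀ᵐ ω ∂Q,
        Real.exp (-lam * W ω) * ((Q.rnDeriv P ω).toReal)⁻¹ = c) ∧
    ((∫ ω, (W ω + lam⁻¹ * Real.log ((Q.rnDeriv P ω).toReal)) ∂Q =
        -lam⁻¹ * Real.log (∫ ω, Real.exp (-lam * W ω) ∂P)) →
      ∀ᵐ ω ∂Q, (Q.rnDeriv P ω).toReal =
        Real.exp (-lam * W ω) / ∫ ω', Real.exp (-lam * W ω') ∂P) := by
  set L : Ω → ℝ := fun ω => (Q.rnDeriv P ω).toReal with hLdef
  set f : Ω → ℝ := fun ω => Real.exp (-lam * W ω) * (L ω)⁻¹ with hfdef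
  set Z : ℝ := ∫ ω, Real.exp (-lam * W ω) ∂P with hZdef
  have hZ : 0 < Z := integral_exp_pos hexp
  -- positivity of L
  have hLposP : ∀ᵐ ω ∂P, 0 < L ω := by
    filter_upwards [hLpos, Measure.rnDeriv_lt_top Q P] with ω h1 h2
    exact ENNReal.toReal_pos h1.ne' h2.ne
  have hLposQ : ∀ᵐ ω ∂Q, 0 < L ω := hQP.ae_le hLposP
  -- L • f = exp a.e. P
  have hLf : (fun ω => L ω • f ω) =ᵐ[P] fun ω => Real.exp (-lam * W ω) := by
    filter_upwards [hLposP] with ω h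
    simp only [smul_eq_mul, hfdef]
    field_simp
  -- ∫ f dQ = Z
  have hEf : ∫ ω, f ω ∂Q = Z := by
    rw [← integral_rnDeriv_smul hQP (f := f), integral_congr_ae hLf]
  -- Integrable f Q
  have hfQ : Integrable f Q := by
    rw [← integrable_rnDeriv_smul_iff hQP]
    exact hexp.congr hLf.symm
  -- log f = -lam W - log L  a.e. Q
  have hlogf : ∀ᵐ ω ∂Q, Real.log (f ω) = -lam * W ω - Real.log (L ω) := by
    filter_upwards [hLposQ] with ω h
    rw [hfdef]
    rw [Real.log_mul (Real.exp_ne_zero _) (inv_ne_zero h.ne'), Real.log_exp,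
      Real.log_inv]
    ring
  have hlogf' : (fun ω => Real.log (f ω)) =ᵐ[Q] fun ω => -lam * W ω - Real.log (L ω) :=
    hlogf
  have hlogfint : Integrable (fun ω => Real.log (f ω)) Q :=
    ((hWQ.const_mul (-lam)).sub hlog).congr hlogf'.symm
  -- the nonnegative gap function
  set g : Ω → ℝ := fun ω => f ω / Z - 1 + Real.log Z - Real.log (f ω) with hgdef
  have hfposQ : ∀ᵐ ω ∂Q, 0 < f ω := by
    filter_upwards [hLposQ] with ω h
    exact mul_pos (Real.exp_pos _) (inv_pos.2 h)
  have hg0 : 0 ≤ᵐ[Q] g := by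
    filter_upwards [hfposQ] with ω h
    have hdiv : 0 < f ω / Z := div_pos h hZ
    have := Real.log_le_sub_one_of_pos hdiv
    rw [Real.log_div h.ne' hZ.ne'] at this
    simp only [hgdef, Pi.zero_apply]
    linarith
  have hgint : Integrable g Q :=
    (((hfQ.div_const Z).sub (integrable_const 1)).add (integrable_const _)).sub hlogfint
  have hgval : ∫ ω, g ω ∂Q = Real.log Z - ∫ ω, Real.log (f ω) ∂Q := by
    have hB : Integrable (fun ω => f ω / Z - 1) Q :=
      (hfQ.div_const Z).sub (integrable_const 1)
    have hA : Integrable (fun ω => f ω / Z - 1 + Real.log Z) Q :=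
      hB.add (integrable_const _)
    simp only [hgdef]
    rw [integral_sub hA hlogfint, integral_add hB (integrable_const (Real.log Z)),
      integral_sub (hfQ.div_const Z) (integrable_const (1:ℝ)), integral_div, hEf,
      div_self hZ.ne', integral_const, integral_const]
    simp
  have hkey : ∫ ω, Real.log (f ω) ∂Q ≤ Real.log Z := by
    have := integral_nonneg_of_ae hg0
    rw [hgval] at this; linarith
  -- LHS identity
  have hLHS : ∫ ω, (W ω + lam⁻¹ * Real.log (L ω)) ∂Q
      = -lam⁻¹ * ∫ ω, Real.log (f ω) ∂Q := by
    rw [integral_congr_ae (g := fun ω => -lam * W ω - Real.log (L ω)) hlogf,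
      integral_sub (hWQ.const_mul (-lam)) hlog,
      integral_add hWQ (hlog.const_mul _), integral_const_mul, integral_const_mul]
    field_simp
    ring
  have hlaminv : (0:ℝ) < lam⁻¹ := inv_pos.2 hlam
  -- equality implies f = Z a.e.
  have hconst : (∫ ω, (W ω + lam⁻¹ * Real.log (L ω)) ∂Q = -lam⁻¹ * Real.log Z) →
      ∀ᵐ ω ∂Q, f ω = Z := by
    intro heq
    rw [hLHS] at heq
    have hint : ∫ ω, Real.log (f ω) ∂Q = Real.log Z := by
      have := mul_left_cancel₀ (a := -lam⁻¹) (by simp [hlam.ne']) heq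
      exact this
    have hg00 : ∫ ω, g ω ∂Q = 0 := by rw [hgval, hint]; ring
    have := (integral_eq_zero_iff_of_nonneg_ae hg0 hgint).mp hg00
    filter_upwards [this, hfposQ] with ω h0 hpos
    have h0' : f ω / Z - 1 + Real.log Z - Real.log (f ω) = 0 := h0
    by_contra hne
    have hdivpos : 0 < f ω / Z := div_pos hpos hZ
    have hdivne : f ω / Z ≠ 1 := by
      intro h; exact hne (by field_simp at h; linarith)
    have := Real.log_lt_sub_one_of_pos hdivpos hdivne
    rw [Real.log_div hpos.ne' hZ.ne'] at this
    linarith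
  refine ⟨?_, ⟨?_, ?_⟩, ?_⟩
  · rw [hLHS]
    have := neg_le_neg hkey
    calc -lam⁻¹ * ∫ ω, Real.log (f ω) ∂Q = lam⁻¹ * -(∫ ω, Real.log (f ω) ∂Q) := by ring
      _ ≥ lam⁻¹ * -(Real.log Z) := by
          exact mul_le_mul_of_nonneg_left this hlaminv.le
      _ = -lam⁻¹ * Real.log Z := by ring
  · intro heq
    exact ⟨Z, hconst heq⟩
  · rintro ⟨c, hc⟩
    have hcZ : c = Z := by
      have h1 : ∫ ω, f ω ∂Q = ∫ (_ : Ω), c ∂Q := integral_congr_ae hc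
      rw [hEf, integral_const] at h1
      simpa using h1.symm
    rw [hLHS]
    have : ∫ ω, Real.log (f ω) ∂Q = Real.log Z := by
      rw [integral_congr_ae (g := fun _ => Real.log Z) ?_, integral_const]
      · simp
      · filter_upwards [hc] with ω h
        rw [show f ω = c from h, hcZ]
    rw [this]
  · intro heq
    filter_upwards [hconst heq, hLposQ] with ω h hpos
    have h' : Real.exp (-lam * W ω) * (L ω)⁻¹ = Z := h
    show L ω = Real.exp (-lam * W ω) / Z
    rw [eq_div_iff hZ.ne', neg_mul]
    field_simp [hpos.ne'] at h'
    linear_combination -h'
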